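/- arXiv:2509.10265 — 8 statements merged into one kernel-verified Lean document; each statement's English description precedes it below -/
import Mathlib

section
/- For every κ with 0 ≤ κ ≤ 1 and every real λ, one has cosh(πλ) · |Γ(1 + κ + iλ)|² ≥ 1/4, where Γ is the complex Gamma function. -/
/-!
By Euler's limit formula, `|Γ(x + iy)|² / Γ(x)² = ∏ⱼ (x + j)² / ((x + j)² + y²)`, and every factor
increases with `x`. At `x = 1/2` the reflection formula gives `|Γ(1/2 + iy)|² = π / cosh(πy)`, so
`Γ(x)² ≤ cosh(πy) |Γ(x + iy)|²` for all `x ≥ 1/2`. On `[1, 2]`, log-convexity of `Γ` and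
`Γ(3/2) = √π/2` give `Γ(x) ≥ π/4 > 1/2`.
-/

open Real Complex Finset ComplexConjugate Filter Topology

lemma Complex.norm_GammaSeq_sq {x : ℝ} (hx : 0 < x) (y : ℝ) {n : ℕ} (hn : n ≠ 0) :
    ‖GammaSeq (x + y * I) n‖ ^ 2 =
      Real.GammaSeq x n ^ 2 * ∏ j ∈ range (n + 1), (x + j) ^ 2 / ((x + j) ^ 2 + y ^ 2) := by
  have hnorm_cpow : ‖(n : ℂ) ^ (x + y * I : ℂ)‖ = (n : ℝ) ^ x := by
    rw [show ((n : ℕ) : ℂ) = ((n : ℝ) : ℂ) by norm_cast,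
      norm_cpow_eq_rpow_re_of_pos (by positivity)]
    simp
  have hnorm_factor : ∀ j : ℕ, ‖(x + y * I : ℂ) + j‖ ^ 2 = (x + j) ^ 2 + y ^ 2 := fun j => by
    rw [Complex.sq_norm, normSq_apply]
    simp only [add_re, ofReal_re, mul_re, I_re, mul_zero, ofReal_im, I_im, mul_one, sub_self,
      add_zero, natCast_re, add_im, mul_im, zero_add, natCast_im]
    ring
  rw [GammaSeq, Real.GammaSeq, norm_div, norm_mul, norm_prod, hnorm_cpow, norm_natCast,
    prod_div_distrib, div_pow, div_pow, ← prod_pow, ← prod_pow]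
  simp only [hnorm_factor]
  have h1 : 0 < ∏ j ∈ range (n + 1), (x + j) ^ 2 := prod_pos fun j _ => by positivity
  have h2 : 0 < ∏ j ∈ range (n + 1), ((x + j) ^ 2 + y ^ 2) :=
    prod_pos fun j _ => by positivity
  field_simp

lemma Complex.norm_Gamma_sq_mul_Gamma_sq_le {x₁ x₂ : ℝ} (hx₁ : 0 < x₁) (hx : x₁ ≤ x₂) (y : ℝ) :
    ‖Gamma (x₁ + y * I)‖ ^ 2 * Real.Gamma x₂ ^ 2 ≤
      ‖Gamma (x₂ + y * I)‖ ^ 2 * Real.Gamma x₁ ^ 2 := by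
  have hx₂ : 0 < x₂ := hx₁.trans_le hx
  have hfactor : ∀ j : ℕ, (x₁ + j) ^ 2 / ((x₁ + j) ^ 2 + y ^ 2) ≤
      (x₂ + j) ^ 2 / ((x₂ + j) ^ 2 + y ^ 2) := fun j => by
    have hsq : (x₁ + j) ^ 2 ≤ (x₂ + j) ^ 2 := by gcongr
    rw [div_le_div_iff₀ (by positivity) (by positivity)]
    nlinarith [mul_le_mul_of_nonneg_right hsq (sq_nonneg y)]
  have hseq : ∀ n ≥ 1, ‖GammaSeq (x₁ + y * I) n‖ ^ 2 * Real.GammaSeq x₂ n ^ 2 ≤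
      ‖GammaSeq (x₂ + y * I) n‖ ^ 2 * Real.GammaSeq x₁ n ^ 2 := fun n hn => by
    rw [norm_GammaSeq_sq hx₁ y (by omega), norm_GammaSeq_sq hx₂ y (by omega)]
    calc _ = Real.GammaSeq x₁ n ^ 2 * Real.GammaSeq x₂ n ^ 2 *
          ∏ j ∈ range (n + 1), (x₁ + j) ^ 2 / ((x₁ + j) ^ 2 + y ^ 2) := by ring
      _ ≤ Real.GammaSeq x₁ n ^ 2 * Real.GammaSeq x₂ n ^ 2 *
          ∏ j ∈ range (n + 1), (x₂ + j) ^ 2 / ((x₂ + j) ^ 2 + y ^ 2) :=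
          mul_le_mul_of_nonneg_left (prod_le_prod (fun j _ => by positivity) fun j _ => hfactor j)
            (by positivity)
      _ = _ := by ring
  have hlim : ∀ x : ℝ, Tendsto (fun n => ‖GammaSeq (x + y * I) n‖ ^ 2) atTop
      (𝓝 (‖Gamma (x + y * I)‖ ^ 2)) := fun x =>
    ((GammaSeq_tendsto_Gamma _).norm).pow 2
  exact le_of_tendsto_of_tendsto ((hlim x₁).mul ((Real.GammaSeq_tendsto_Gamma x₂).pow 2))
    ((hlim x₂).mul ((Real.GammaSeq_tendsto_Gamma x₁).pow 2))
    (eventually_atTop.2 ⟨1, hseq⟩)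

lemma Complex.norm_Gamma_one_half_add_mul_I_sq (y : ℝ) :
    ‖Gamma (1 / 2 + y * I)‖ ^ 2 = π / Real.cosh (π * y) := by
  have hreflect := Gamma_mul_Gamma_one_sub (1 / 2 + y * I)
  have hconj : 1 - (1 / 2 + y * I) = conj (1 / 2 + y * I) := by
    rw [map_add, map_mul, conj_ofReal, conj_I, map_div₀, map_one, map_ofNat]
    ring
  have hsin : sin (π * (1 / 2 + y * I)) = Real.cosh (π * y) := by
    rw [show (π : ℂ) * (1 / 2 + y * I) = (π * y : ℝ) * I + π / 2 by push_cast; ring,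
      sin_add_pi_div_two, cos_mul_I, ofReal_cosh]
  rw [hconj, Gamma_conj, mul_conj, hsin, normSq_eq_norm_sq] at hreflect
  exact_mod_cast hreflect

lemma Complex.Gamma_sq_le_cosh_mul_norm_Gamma_sq {x : ℝ} (hx : 1 / 2 ≤ x) (y : ℝ) :
    Real.Gamma x ^ 2 ≤ Real.cosh (π * y) * ‖Gamma (x + y * I)‖ ^ 2 := by
  have h := norm_Gamma_sq_mul_Gamma_sq_le (by norm_num) hx y
  rw [show ((1 / 2 : ℝ) : ℂ) = 1 / 2 by norm_num, norm_Gamma_one_half_add_mul_I_sq,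
    Real.Gamma_one_half_eq, sq_sqrt pi_pos.le] at h
  have hcosh := Real.cosh_pos (π * y)
  rw [div_mul_eq_mul_div, div_le_iff₀ hcosh] at h
  nlinarith [pi_pos]

lemma Real.pi_div_four_le_Gamma {x : ℝ} (hx₁ : 1 ≤ x) (hx₂ : x ≤ 2) : π / 4 ≤ Real.Gamma x := by
  have hGamma_le_one : Real.Gamma (3 - x) ≤ 1 := by
    have := convexOn_Gamma.le_on_segment (x := 1) (y := 2) (by norm_num) (by norm_num)
      (z := 3 - x) (by rw [segment_eq_Icc (by norm_num)]; constructor <;> linarith)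
    simpa [Real.Gamma_two] using this
  have hlogconvex := Gamma_mul_add_mul_le_rpow_Gamma_mul_rpow_Gamma (a := 1 / 2) (b := 1 / 2)
    (by linarith : 0 < x) (by linarith : 0 < 3 - x) (by norm_num) (by norm_num) (by norm_num)
  have h32 : Real.Gamma (3 / 2) = √π / 2 := by
    rw [show (3 / 2 : ℝ) = 1 / 2 + 1 by norm_num, Real.Gamma_add_one (by norm_num),
      Real.Gamma_one_half_eq]
    ring
  rw [show 1 / 2 * x + 1 / 2 * (3 - x) = 3 / 2 by ring, h32, ← sqrt_eq_rpow,
    ← sqrt_eq_rpow] at hlogconvex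
  have hsqrt : √π / 2 ≤ √(Real.Gamma x) :=
    hlogconvex.trans (mul_le_of_le_one_right (sqrt_nonneg _) (sqrt_le_one.2 hGamma_le_one))
  have := pow_le_pow_left₀ (by positivity) hsqrt 2
  rw [div_pow, sq_sqrt pi_pos.le, sq_sqrt (Real.Gamma_pos_of_pos (by linarith)).le] at this
  linarith

/-- For every `κ` with `0 ≤ κ ≤ 1` and every real `λ`,
`cosh(πλ) · |Γ(1 + κ + iλ)|² ≥ 1/4`. -/
theorem stmt_2 (κ l : ℝ) (hκ0 : 0 ≤ κ) (hκ1 : κ ≤ 1) :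
    (1 : ℝ) / 4 ≤ Real.cosh (π * l) *
      (‖Complex.Gamma (1 + (κ : ℂ) + Complex.I * (l : ℂ))‖) ^ 2 := by
  have hGamma : 1 / 2 ≤ Real.Gamma (1 + κ) :=
    le_trans (by linarith [pi_gt_three]) (Real.pi_div_four_le_Gamma (by linarith) (by linarith))
  have harg : 1 + (κ : ℂ) + I * l = ((1 + κ : ℝ) : ℂ) + l * I := by push_cast; ring
  rw [harg]
  calc (1 : ℝ) / 4 = (1 / 2) ^ 2 := by norm_num
    _ ≤ Real.Gamma (1 + κ) ^ 2 := by gcongr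
    _ ≤ _ := Complex.Gamma_sq_le_cosh_mul_norm_Gamma_sq (by linarith) l
end

section
/- For every H with 0 < H < 1 and every t > 0, one has cosh(Ht) − (1/2)·(2 sinh(t/2))^{2H} = (1/2) e^{−Ht} + Σ_{n=1}^{∞} (H/n!) · (∏_{j=1}^{n−1} (j − 2H)) · e^{−(n−H)t}, where the series on the right converges absolutely (for n = 1 the empty product equals 1). -/
/-!
Put `x = e^{-t}`. Then `2 sinh(t/2) = e^{t/2} (1 - x)`, so
`(2 sinh(t/2))^{2H} = e^{Ht} (1 - x)^{2H}`, and since `0 < x < 1` the binomial series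
`(1 - x)^{2H} = ∑ₙ C(2H, n) (-x)ⁿ` converges absolutely.
Its `n = 0` term cancels `e^{Ht}/2` in `cosh(Ht)`, and for `n = m + 1` one has
`C(2H, m+1) (-1)^{m+1} = -(2H/(m+1)!) ∏_{j<m} (j + 1 - 2H)`.
-/

open Real Finset
open scoped Nat

theorem Ring.choose_eq_prod_range_div {K : Type*} [Field K] [CharZero K] (a : K) (n : ℕ) :
    Ring.choose a n = (∏ j ∈ range n, (a - j)) / n ! := by
  rw [Ring.choose_eq_smul, ← Polynomial.aeval_eq_smeval, Polynomial.aeval_def,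
    ← Polynomial.eval_map, descPochhammer_map, descPochhammer_eval_eq_prod_range, smul_eq_mul,
    inv_mul_eq_div]

theorem Ring.choose_succ_mul_neg_pow {K : Type*} [Field K] [CharZero K] (a y : K) (m : ℕ) :
    Ring.choose a (m + 1) * (-y) ^ (m + 1)
      = -(a / (m + 1)! * (∏ j ∈ range m, ((j : K) + 1 - a)) * y ^ (m + 1)) := by
  have hprod :
      ∏ j ∈ range m, (a - (j + 1 : ℕ)) = (-1) ^ m * ∏ j ∈ range m, ((j : K) + 1 - a) := by
    have h := prod_neg (s := range m) fun j : ℕ ↦ (j : K) + 1 - a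
    rw [card_range] at h
    rw [← h]
    push_cast
    simp only [neg_sub]
  have hsign : (-1 : K) ^ m * (-1) ^ m = 1 := by rw [← mul_pow]; norm_num
  rw [Ring.choose_eq_prod_range_div, prod_range_succ', hprod, neg_pow y, pow_succ (-1 : K)]
  push_cast
  linear_combination
    (-(a / (m + 1)! * (∏ j ∈ range m, ((j : K) + 1 - a)) * y ^ (m + 1))) * hsign

theorem Real.mem_eball_zero_one {y : ℝ} (hy : |y| < 1) : y ∈ Metric.eball (0 : ℝ) 1 := by
  simpa [enorm_eq_nnnorm, ← NNReal.coe_lt_one] using hy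

theorem Real.hasSum_choose_mul_pow (a : ℝ) {y : ℝ} (hy : |y| < 1) :
    HasSum (fun n ↦ Ring.choose a n * y ^ n) ((1 + y) ^ a) := by
  simpa only [binomialSeries_apply, List.ofFn_const, List.prod_replicate, smul_eq_mul,
    zero_add] using
    Real.one_add_rpow_hasFPowerSeriesOnBall_zero.hasSum (Real.mem_eball_zero_one hy)

theorem Real.summable_abs_choose_mul_pow (a : ℝ) {y : ℝ} (hy : |y| < 1) :
    Summable (fun n ↦ |Ring.choose a n * y ^ n|) := by
  simpa only [binomialSeries_apply, List.ofFn_const, List.prod_replicate, smul_eq_mul,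
    Real.norm_eq_abs] using
    (binomialSeries ℝ a).summable_norm_apply
      (Metric.eball_subset_eball binomialSeries_radius_ge_one (Real.mem_eball_zero_one hy))

theorem Real.two_mul_sinh_half_rpow {t : ℝ} (ht : 0 ≤ t) (p : ℝ) :
    (2 * sinh (t / 2)) ^ p = exp (p * t / 2) * (1 - exp (-t)) ^ p := by
  have h : 2 * sinh (t / 2) = exp (t / 2) * (1 - exp (-t)) := by
    rw [sinh_eq, mul_sub, mul_one, ← exp_add]
    ring_nf
  rw [h, mul_rpow (exp_pos _).le (by simpa using ht), ← exp_mul]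
  ring_nf

theorem stmt_5_general (H t : ℝ) (ht : 0 < t) :
    Summable (fun m : ℕ =>
      |(H / (Nat.factorial (m + 1) : ℝ)) *
        (∏ j ∈ Finset.range m, ((j : ℝ) + 1 - 2 * H)) *
        Real.exp (-(((m : ℝ) + 1) - H) * t)|) ∧
    Real.cosh (H * t) - (1 / 2) * (2 * Real.sinh (t / 2)) ^ (2 * H)
      = (1 / 2) * Real.exp (-(H * t)) +
        ∑' m : ℕ, (H / (Nat.factorial (m + 1) : ℝ)) *
          (∏ j ∈ Finset.range m, ((j : ℝ) + 1 - 2 * H)) *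
          Real.exp (-(((m : ℝ) + 1) - H) * t) := by
  have hx : |-exp (-t)| < 1 := by
    rw [abs_neg, abs_of_pos (exp_pos _), exp_lt_one_iff]
    linarith
  have hterm : ∀ m : ℕ, (H / (m + 1)! : ℝ) * (∏ j ∈ range m, ((j : ℝ) + 1 - 2 * H)) *
      exp (-(((m : ℝ) + 1) - H) * t)
        = -(exp (H * t) / 2) * (Ring.choose (2 * H) (m + 1) * (-exp (-t)) ^ (m + 1)) := by
    intro m
    rw [Ring.choose_succ_mul_neg_pow, ← exp_nat_mul, show -(((m : ℝ) + 1) - H) * t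
      = H * t + ((m + 1 : ℕ) : ℝ) * -t by push_cast; ring, exp_add]
    ring
  have hsum := (hasSum_nat_add_iff' 1).mpr (hasSum_choose_mul_pow (2 * H) hx)
  refine ⟨?_, ?_⟩
  · refine (((summable_nat_add_iff 1).mpr (summable_abs_choose_mul_pow (2 * H) hx)).mul_left
      |exp (H * t) / 2|).congr fun m ↦ ?_
    simp only [hterm, abs_mul, abs_neg]
  · rw [tsum_congr hterm, tsum_mul_left, hsum.tsum_eq, two_mul_sinh_half_rpow ht.le, cosh_eq]
    simp only [range_one, sum_singleton, Ring.choose_zero_right, pow_zero, mul_one,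
      ← sub_eq_add_neg]
    ring_nf

/-- For `0 < H < 1` and `t > 0`,
`cosh(Ht) − (1/2)(2 sinh(t/2))^{2H}
  = (1/2) e^{−Ht} + Σ_{n≥1} (H/n!) (∏_{j=1}^{n−1} (j − 2H)) e^{−(n−H)t}`,
with the series converging absolutely. (The summation index `n ≥ 1` is
represented by `n = m + 1` with `m : ℕ`.) -/
theorem stmt_5 (H t : ℝ) (hH0 : 0 < H) (hH1 : H < 1) (ht : 0 < t) :
    Summable (fun m : ℕ =>
      |(H / (Nat.factorial (m + 1) : ℝ)) *
        (∏ j ∈ Finset.range m, ((j : ℝ) + 1 - 2 * H)) *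
        Real.exp (-(((m : ℝ) + 1) - H) * t)|) ∧
    Real.cosh (H * t) - (1 / 2) * (2 * Real.sinh (t / 2)) ^ (2 * H)
      = (1 / 2) * Real.exp (-(H * t)) +
        ∑' m : ℕ, (H / (Nat.factorial (m + 1) : ℝ)) *
          (∏ j ∈ Finset.range m, ((j : ℝ) + 1 - 2 * H)) *
          Real.exp (-(((m : ℝ) + 1) - H) * t) :=
  stmt_5_general H t ht
end

section
/- For every H with 0 < H ≤ 1/2, the function t ↦ cosh(Ht) − (1/2)·(2 sinh(t/2))^{2H} is convex on the interval (0, ∞). -/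
/-!
With `u = 2 sinh (t / 2)` one has `u' = cosh (t / 2)` and `cosh (t / 2) ^ 2 = 1 + u ^ 2 / 4`, so
`(u ^ p)'' = p (p - 1) u ^ (p - 2) + p ^ 2 u ^ p / 4`. For `p = 2H` the second derivative of
`cosh (H t) - u ^ (2H) / 2` is therefore
`H ^ 2 (cosh (H t) - u ^ (2H) / 2) + H (1 - 2H) u ^ (2H - 2)`.
Both terms are nonnegative: the first because `u ≤ exp (t / 2)` gives
`u ^ (2H) ≤ exp (H t) ≤ 2 cosh (H t)`, the second because `2H ≤ 1`.
-/

open Real Set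

/-- The correlation function `B̃_H` of the Lamperti transform of fractional Brownian motion. -/
noncomputable def lampertiCorrelation (H t : ℝ) : ℝ :=
  cosh (H * t) - 1 / 2 * (2 * sinh (t / 2)) ^ (2 * H)

section TwoSinhHalf

variable {t : ℝ}

lemma two_sinh_half_nonneg (ht : 0 ≤ t) : 0 ≤ 2 * sinh (t / 2) := by
  have : 0 ≤ sinh (t / 2) := sinh_nonneg_iff.mpr (by linarith)
  linarith

lemma two_sinh_half_pos (ht : 0 < t) : 0 < 2 * sinh (t / 2) := by
  have : 0 < sinh (t / 2) := sinh_pos_iff.mpr (by linarith)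
  linarith

lemma two_sinh_half_le_exp (t : ℝ) : 2 * sinh (t / 2) ≤ exp (t / 2) := by
  rw [sinh_eq]
  linarith [exp_pos (-(t / 2))]

lemma cosh_half_sq (t : ℝ) : cosh (t / 2) ^ 2 = 1 + (2 * sinh (t / 2)) ^ 2 / 4 := by
  rw [cosh_sq]
  ring

lemma two_sinh_half_rpow_le_exp {H : ℝ} (hH : 0 ≤ H) (ht : 0 ≤ t) :
    (2 * sinh (t / 2)) ^ (2 * H) ≤ exp (H * t) :=
  calc (2 * sinh (t / 2)) ^ (2 * H) ≤ exp (t / 2) ^ (2 * H) :=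
        rpow_le_rpow (two_sinh_half_nonneg ht) (two_sinh_half_le_exp t) (by linarith)
    _ = exp (H * t) := by rw [← exp_mul]; ring_nf

lemma hasDerivAt_two_sinh_half (t : ℝ) :
    HasDerivAt (fun t => 2 * sinh (t / 2)) (cosh (t / 2)) t :=
  (((hasDerivAt_id' t).div_const 2).sinh.const_mul 2).congr_deriv (by ring)

lemma hasDerivAt_two_sinh_half_rpow (p : ℝ) (ht : 0 < t) :
    HasDerivAt (fun t => (2 * sinh (t / 2)) ^ p)
      (p * (2 * sinh (t / 2)) ^ (p - 1) * cosh (t / 2)) t := by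
  convert (hasDerivAt_two_sinh_half t).rpow_const (p := p) (Or.inl (two_sinh_half_pos ht).ne')
    using 1
  ring

lemma hasDerivAt_deriv_two_sinh_half_rpow (p : ℝ) (ht : 0 < t) :
    HasDerivAt (fun t => p * (2 * sinh (t / 2)) ^ (p - 1) * cosh (t / 2))
      (p * (p - 1) * (2 * sinh (t / 2)) ^ (p - 2) + p ^ 2 / 4 * (2 * sinh (t / 2)) ^ p) t := by
  have hu := two_sinh_half_pos ht
  have hcosh : HasDerivAt (fun t => cosh (t / 2)) (sinh (t / 2) / 2) t :=
    ((hasDerivAt_id' t).div_const 2).cosh.congr_deriv (by ring)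
  refine (((hasDerivAt_two_sinh_half_rpow (p - 1) ht).const_mul p).mul hcosh).congr_deriv ?_
  set u := 2 * sinh (t / 2)
  have hsinh : sinh (t / 2) = u / 2 := by simp [u]
  have hpow₁ : u ^ (p - 1) * u = u ^ p := by
    rw [← rpow_add_one hu.ne']; ring_nf
  have hpow₂ : u ^ (p - 2) * u ^ 2 = u ^ p := by
    rw [← rpow_natCast, ← rpow_add hu]; ring_nf
  rw [hsinh, show p - 1 - 1 = p - 2 by ring]
  linear_combination (p * (p - 1) * u ^ (p - 2)) * cosh_half_sq t
    + (p / 4 * (p - 1) * hpow₂ + p / 4 * hpow₁)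

end TwoSinhHalf

section Lamperti

variable {H t : ℝ}

lemma hasDerivAt_lampertiCorrelation (ht : 0 < t) :
    HasDerivAt (lampertiCorrelation H)
      (H * sinh (H * t) - H * (2 * sinh (t / 2)) ^ (2 * H - 1) * cosh (t / 2)) t := by
  have h := (((hasDerivAt_id' t).const_mul H).cosh).sub
    ((hasDerivAt_two_sinh_half_rpow (2 * H) ht).const_mul (1 / 2))
  exact h.congr_deriv (by ring)

lemma hasDerivAt_deriv_lampertiCorrelation (ht : 0 < t) :
    HasDerivAt (fun t => H * sinh (H * t) - H * (2 * sinh (t / 2)) ^ (2 * H - 1) * cosh (t / 2))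
      (H ^ 2 * (cosh (H * t) - (2 * sinh (t / 2)) ^ (2 * H) / 2)
        + H * (1 - 2 * H) * (2 * sinh (t / 2)) ^ (2 * H - 2)) t := by
  have h := (((hasDerivAt_id' t).const_mul H).sinh.const_mul H).sub
    ((hasDerivAt_deriv_two_sinh_half_rpow (2 * H) ht).const_mul (1 / 2))
  have hfun : (fun t => H * sinh (H * t) - H * (2 * sinh (t / 2)) ^ (2 * H - 1) * cosh (t / 2)) =
      fun t => H * sinh (H * t) -
        1 / 2 * (2 * H * (2 * sinh (t / 2)) ^ (2 * H - 1) * cosh (t / 2)) := by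
    ext t; ring
  rw [hfun]
  exact h.congr_deriv (by ring)

lemma lampertiCorrelation_deriv2_nonneg (hH0 : 0 ≤ H) (hH : H ≤ 1 / 2) (ht : 0 ≤ t) :
    0 ≤ H ^ 2 * (cosh (H * t) - (2 * sinh (t / 2)) ^ (2 * H) / 2)
      + H * (1 - 2 * H) * (2 * sinh (t / 2)) ^ (2 * H - 2) := by
  have hexp : exp (H * t) ≤ 2 * cosh (H * t) := by
    rw [cosh_eq]; linarith [exp_pos (-(H * t))]
  have hcosh : 0 ≤ cosh (H * t) - (2 * sinh (t / 2)) ^ (2 * H) / 2 := by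
    linarith [two_sinh_half_rpow_le_exp hH0 ht]
  have hrpow := rpow_nonneg (two_sinh_half_nonneg ht) (2 * H - 2)
  have hH' : 0 ≤ 1 - 2 * H := by linarith
  exact add_nonneg (mul_nonneg (sq_nonneg H) hcosh) (mul_nonneg (mul_nonneg hH0 hH') hrpow)

end Lamperti

/-- For every `H` with `0 < H ≤ 1/2`, the function
`t ↦ cosh(Ht) − (1/2)(2 sinh(t/2))^{2H}` is convex on `(0, ∞)`. -/
theorem stmt_6 (H : ℝ) (hH0 : 0 < H) (hH : H ≤ 1 / 2) :
    ConvexOn ℝ (Set.Ioi (0 : ℝ))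
      (fun t : ℝ => Real.cosh (H * t) - (1 / 2) * (2 * Real.sinh (t / 2)) ^ (2 * H)) := by
  refine convexOn_of_hasDerivWithinAt2_nonneg (f := lampertiCorrelation H) (convex_Ioi 0)
    (fun t ht => (hasDerivAt_lampertiCorrelation ht).continuousAt.continuousWithinAt)
    (fun t ht => (hasDerivAt_lampertiCorrelation (interior_Ioi.subset ht)).hasDerivWithinAt)
    (fun t ht => (hasDerivAt_deriv_lampertiCorrelation (interior_Ioi.subset ht)).hasDerivWithinAt)
    (fun t ht => lampertiCorrelation_deriv2_nonneg hH0.le hH (interior_Ioi.subset ht).le)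
end

section
/- For every H with 0 < H ≤ 1/2 and every real t, one has cosh((2H − 1)t/2)/cosh(t/2) ≤ 1/cosh(Ht). -/
/-!
Writing `x = (2H - 1)t/2` and `y = Ht`, we have `x - y = -t/2` and `xy ≤ 0`, so `sinh x sinh y ≤ 0`
and the subtraction formula gives `cosh x cosh y ≤ cosh (x - y) = cosh (t/2)`.
-/

open Real

theorem Real.sinh_mul_sinh_nonpos {x y : ℝ} (h : x * y ≤ 0) : sinh x * sinh y ≤ 0 := by
  rcases mul_nonpos_iff.mp h with ⟨hx, hy⟩ | ⟨hx, hy⟩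
  · exact mul_nonpos_of_nonneg_of_nonpos (sinh_nonneg_iff.mpr hx) (sinh_nonpos_iff.mpr hy)
  · exact mul_nonpos_of_nonpos_of_nonneg (sinh_nonpos_iff.mpr hx) (sinh_nonneg_iff.mpr hy)

theorem Real.cosh_mul_cosh_le_cosh_sub {x y : ℝ} (h : x * y ≤ 0) :
    cosh x * cosh y ≤ cosh (x - y) := by
  rw [cosh_sub]
  linarith [sinh_mul_sinh_nonpos h]

/-- For every `H` with `0 < H ≤ 1/2` and every real `t`,
`cosh((2H − 1)t/2)/cosh(t/2) ≤ 1/cosh(Ht)`. -/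
theorem stmt_7 (H t : ℝ) (hH0 : 0 < H) (hH : H ≤ 1 / 2) :
    Real.cosh ((2 * H - 1) * t / 2) / Real.cosh (t / 2) ≤ 1 / Real.cosh (H * t) := by
  rw [div_le_div_iff₀ (cosh_pos _) (cosh_pos _), one_mul]
  have hxy : (2 * H - 1) * t / 2 * (H * t) ≤ 0 := by
    have : H * (2 * H - 1) ≤ 0 := mul_nonpos_of_nonneg_of_nonpos hH0.le (by linarith)
    nlinarith [sq_nonneg t]
  calc cosh ((2 * H - 1) * t / 2) * cosh (H * t)
      ≤ cosh ((2 * H - 1) * t / 2 - H * t) := cosh_mul_cosh_le_cosh_sub hxy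
    _ = cosh (t / 2) := by rw [← cosh_neg]; congr 1; ring
end

section
/- Let B(H, t) = cosh((2H − 1)t/2)/cosh(t/2). For every H with 0 < H < 1/2 and every t > 0, one has ∂B/∂H (H, t) − (t/H) · ∂B/∂t (H, t) > 0. Equivalently, with τ = t/2 and h̄ = 1 − 2H, this expression equals (τ sinh(h̄τ)/(H cosh τ)) · (tanh(τ)/tanh(h̄τ) − 1), which is strictly positive. -/
open Real

/-!
With `τ = t/2` and `a = (1 - 2H)τ`, the two partial derivatives combine, after the
coefficients `2H` and `1 - 2H` add up to `1`, into `τ (cosh a · tanh τ - sinh a) / (H cosh τ)`.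
Since `0 < a < τ` and `tanh` is strictly increasing, `tanh τ / tanh a > 1`.
-/

theorem Real.tanh_strictMono : StrictMono tanh := fun x y hxy => by
  rwa [← strictMonoOn_artanh.lt_iff_lt ⟨neg_one_lt_tanh x, tanh_lt_one x⟩
    ⟨neg_one_lt_tanh y, tanh_lt_one y⟩, artanh_tanh, artanh_tanh]

theorem Real.tanh_pos {x : ℝ} (hx : 0 < x) : 0 < tanh x := by
  simpa using tanh_strictMono hx

theorem Real.one_lt_tanh_div_tanh {a b : ℝ} (ha : 0 < a) (hab : a < b) :
    1 < tanh b / tanh a :=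
  (one_lt_div (tanh_pos ha)).2 (tanh_strictMono hab)

theorem deriv_cosh_affine_div_const (t c H : ℝ) :
    deriv (fun h : ℝ => cosh ((2 * h - 1) * t / 2) / c) H = t * sinh ((2 * H - 1) * t / 2) / c := by
  have hArg : HasDerivAt (fun h : ℝ => (2 * h - 1) * t / 2) t H := by
    simpa using ((((hasDerivAt_id H).const_mul 2).sub_const 1).mul_const t).div_const 2
  rw [(hArg.cosh.div_const c).deriv, mul_comm]

theorem deriv_cosh_mul_div_cosh (c t : ℝ) :
    deriv (fun s : ℝ => cosh (c * s / 2) / cosh (s / 2)) t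
      = (c * sinh (c * t / 2) * cosh (t / 2) - cosh (c * t / 2) * sinh (t / 2))
          / (2 * cosh (t / 2) ^ 2) := by
  have hNum : HasDerivAt (fun s : ℝ => c * s / 2) (c / 2) t := by
    simpa using ((hasDerivAt_id t).const_mul c).div_const 2
  have hDen : HasDerivAt (fun s : ℝ => s / 2) (1 / 2) t := by
    simpa using (hasDerivAt_id t).div_const 2
  refine (hNum.cosh.div hDen.cosh (cosh_pos _).ne').deriv.trans ?_
  field_simp

theorem deriv_hurst_sub_deriv_time_eq {H t : ℝ} (hH0 : H ≠ 0) (ha : (1 - 2 * H) * (t / 2) ≠ 0) :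
    deriv (fun h : ℝ => cosh ((2 * h - 1) * t / 2) / cosh (t / 2)) H
      - (t / H) * deriv (fun s : ℝ => cosh ((2 * H - 1) * s / 2) / cosh (s / 2)) t
      = ((t / 2) * sinh ((1 - 2 * H) * (t / 2)) / (H * cosh (t / 2))) *
          (tanh (t / 2) / tanh ((1 - 2 * H) * (t / 2)) - 1) := by
  have hArg : (2 * H - 1) * t / 2 = -((1 - 2 * H) * (t / 2)) := by ring
  have hsinh : sinh ((1 - 2 * H) * (t / 2)) ≠ 0 := by simpa using ha
  rw [deriv_cosh_affine_div_const, deriv_cosh_mul_div_cosh, hArg, sinh_neg, cosh_neg,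
    tanh_eq_sinh_div_cosh, tanh_eq_sinh_div_cosh]
  -- The identity holds with `sinh a` and `cosh a` as independent unknowns.
  generalize (1 - 2 * H) * (t / 2) = a at hsinh ⊢
  field_simp
  ring

/-- Let `B(H,t) = cosh((2H−1)t/2)/cosh(t/2)`. For `0 < H < 1/2` and `t > 0`,
`∂B/∂H (H,t) − (t/H) ∂B/∂t (H,t)` equals
`(τ sinh(h̄τ)/(H cosh τ)) (tanh τ / tanh(h̄τ) − 1)` with `τ = t/2`, `h̄ = 1 − 2H`,
and this quantity is strictly positive. -/
theorem stmt_8 (H t : ℝ) (hH0 : 0 < H) (hH : H < 1 / 2) (ht : 0 < t) :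
    (deriv (fun h : ℝ => Real.cosh ((2 * h - 1) * t / 2) / Real.cosh (t / 2)) H
      - (t / H) * deriv (fun s : ℝ => Real.cosh ((2 * H - 1) * s / 2) / Real.cosh (s / 2)) t
      = ((t / 2) * Real.sinh ((1 - 2 * H) * (t / 2)) / (H * Real.cosh (t / 2))) *
          (Real.tanh (t / 2) / Real.tanh ((1 - 2 * H) * (t / 2)) - 1)) ∧
    0 < deriv (fun h : ℝ => Real.cosh ((2 * h - 1) * t / 2) / Real.cosh (t / 2)) H
      - (t / H) * deriv (fun s : ℝ => Real.cosh ((2 * H - 1) * s / 2) / Real.cosh (s / 2)) t := by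
  have ha : 0 < (1 - 2 * H) * (t / 2) := by apply mul_pos <;> linarith
  have hat : (1 - 2 * H) * (t / 2) < t / 2 := by nlinarith
  have key := deriv_hurst_sub_deriv_time_eq hH0.ne' ha.ne'
  refine ⟨key, key ▸ mul_pos ?_ (sub_pos.2 (one_lt_tanh_div_tanh ha hat))⟩
  have hsinh := sinh_pos_iff.2 ha
  positivity
end

section
/- For α > 1 and 0 < H < 1, set κ = α + H − 1 and define f_{α,H}(λ) = sin(πH) Γ(κ+H) Γ(κ+1−H) κ cosh(πλ) / ((sinh²(πλ) + sin²(πH)) · |Γ(iλ + κ + 1)|²), where Γ is the complex Gamma function (real Gamma on positive reals). Then for every fixed α > 1 and every fixed real λ, lim_{H → 0+} H · f_{α,H}(λH) = 1/(π(1 + λ²)). -/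
/-!
Divide numerator and denominator of `H · f_{α,H}(λH)` by `H²`. Then
`sin(πH)/H → π` and `sinh(πλH)/H → πλ`, while the remaining Gamma factors are continuous at
`H = 0`, where `Γ(κ+H) Γ(κ+1−H) κ / |Γ(iλH+κ+1)|²` becomes `Γ(α−1) Γ(α) (α−1) / Γ(α)² = 1`.
The limit is therefore `π / (π²λ² + π²)`.
-/

open Real Complex Filter Topology

theorem HasDerivAt.tendsto_div_self_nhdsGT {f : ℝ → ℝ} {f' : ℝ} (hf : HasDerivAt f f' 0)
    (h0 : f 0 = 0) : Tendsto (fun t ↦ f t / t) (𝓝[>] 0) (𝓝 f') := by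
  simpa [h0, div_eq_inv_mul] using hf.tendsto_slope_zero_right

theorem tendsto_sin_mul_div_nhdsGT (c : ℝ) :
    Tendsto (fun t ↦ Real.sin (c * t) / t) (𝓝[>] 0) (𝓝 c) :=
  HasDerivAt.tendsto_div_self_nhdsGT
    (by simpa using ((hasDerivAt_id (0 : ℝ)).const_mul c).sin) (by simp)

theorem tendsto_sinh_mul_div_nhdsGT (c : ℝ) :
    Tendsto (fun t ↦ Real.sinh (c * t) / t) (𝓝[>] 0) (𝓝 c) :=
  HasDerivAt.tendsto_div_self_nhdsGT
    (by simpa using ((hasDerivAt_id (0 : ℝ)).const_mul c).sinh) (by simp)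

theorem Real.continuousAt_Gamma_of_pos {s : ℝ} (hs : 0 < s) : ContinuousAt Real.Gamma s :=
  (Real.differentiableAt_Gamma fun m ↦
    ((neg_nonpos.mpr m.cast_nonneg).trans_lt hs).ne').continuousAt

theorem Complex.continuousAt_Gamma_ofReal_of_pos {s : ℝ} (hs : 0 < s) :
    ContinuousAt Complex.Gamma s :=
  Complex.continuousAt_Gamma _ fun m h ↦ by
    have : s = -m := by exact_mod_cast h
    linarith [m.cast_nonneg (α := ℝ)]

theorem Real.Gamma_sub_one_mul_Gamma_mul_sub_one {s : ℝ} (hs : s ≠ 1) :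
    Real.Gamma (s - 1) * Real.Gamma s * (s - 1) = Real.Gamma s ^ 2 := by
  have h := Real.Gamma_add_one (sub_ne_zero.mpr hs)
  rw [sub_add_cancel] at h
  rw [h]
  ring

theorem tendsto_Gamma_ratio_nhds_zero (α l : ℝ) (hα : 1 < α) :
    Tendsto (fun H : ℝ ↦ Real.Gamma ((α + H - 1) + H) * Real.Gamma ((α + H - 1) + 1 - H) *
        (α + H - 1) * Real.cosh (π * (l * H)) /
        ‖Complex.Gamma (Complex.I * ((l * H : ℝ) : ℂ) + ((α + H - 1 : ℝ) : ℂ) + 1)‖ ^ 2)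
      (𝓝 0) (𝓝 1) := by
  have hΓα : 0 < Real.Gamma α := Real.Gamma_pos_of_pos (by linarith)
  have hΓ₁ : Tendsto (fun H : ℝ ↦ Real.Gamma ((α + H - 1) + H)) (𝓝 0)
      (𝓝 (Real.Gamma (α - 1))) :=
    (Real.continuousAt_Gamma_of_pos (by linarith)).tendsto.comp
      ((by fun_prop : Continuous fun H : ℝ ↦ (α + H - 1) + H).tendsto' 0 _ (by ring))
  have hΓ₂ : Tendsto (fun H : ℝ ↦ Real.Gamma ((α + H - 1) + 1 - H)) (𝓝 0)
      (𝓝 (Real.Gamma α)) :=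
    (Real.continuousAt_Gamma_of_pos (by linarith)).tendsto.comp
      ((by fun_prop : Continuous fun H : ℝ ↦ (α + H - 1) + 1 - H).tendsto' 0 _ (by ring))
  have hκ : Tendsto (fun H : ℝ ↦ α + H - 1) (𝓝 0) (𝓝 (α - 1)) :=
    (by fun_prop : Continuous fun H : ℝ ↦ α + H - 1).tendsto' 0 _ (by ring)
  have hcosh : Tendsto (fun H : ℝ ↦ Real.cosh (π * (l * H))) (𝓝 0) (𝓝 1) :=
    (by fun_prop : Continuous fun H : ℝ ↦ Real.cosh (π * (l * H))).tendsto' 0 _ (by simp)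
  have hΓℂ : Tendsto (fun H : ℝ ↦
      ‖Complex.Gamma (Complex.I * ((l * H : ℝ) : ℂ) + ((α + H - 1 : ℝ) : ℂ) + 1)‖ ^ 2)
      (𝓝 0) (𝓝 (Real.Gamma α ^ 2)) := by
    have h := (Complex.continuousAt_Gamma_ofReal_of_pos (by linarith : 0 < α)).tendsto.comp
      ((by fun_prop : Continuous fun H : ℝ ↦
        Complex.I * ((l * H : ℝ) : ℂ) + ((α + H - 1 : ℝ) : ℂ) + 1).tendsto' 0 (α : ℂ)
        (by push_cast; ring))
    rw [Complex.Gamma_ofReal] at h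
    simpa only [Function.comp_def, Complex.norm_real, Real.norm_of_nonneg hΓα.le] using
      h.norm.pow 2
  have hlim := (((hΓ₁.mul hΓ₂).mul hκ).mul hcosh).div hΓℂ (by positivity)
  rwa [mul_one, Real.Gamma_sub_one_mul_Gamma_mul_sub_one hα.ne', div_self (by positivity)]
    at hlim

theorem mul_div_sq_add_sq_mul_eq {K : Type*} [Field K] (H s a b k c B sh : K) :
    H * (s * a * b * k * c / ((sh ^ 2 + s ^ 2) * B)) =
      s / H * (a * b * k * c / B) / ((sh / H) ^ 2 + (s / H) ^ 2) := by
  rw [div_pow, div_pow, ← add_div]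
  rcases eq_or_ne H 0 with rfl | hH
  · simp
  · simp only [div_eq_mul_inv, mul_inv, inv_inv]
    field_simp

/-- With `κ = α + H − 1` and
`f_{α,H}(λ) = sin(πH) Γ(κ+H) Γ(κ+1−H) κ cosh(πλ) / ((sinh²(πλ)+sin²(πH)) |Γ(iλ+κ+1)|²)`,
for every fixed `α > 1` and fixed real `λ` one has
`lim_{H → 0+} H · f_{α,H}(λH) = 1/(π(1+λ²))`. -/
theorem stmt_10 (α l : ℝ) (hα : 1 < α) :
    Filter.Tendsto (fun H : ℝ =>
        H * (Real.sin (π * H) * Real.Gamma ((α + H - 1) + H) *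
          Real.Gamma ((α + H - 1) + 1 - H) * (α + H - 1) * Real.cosh (π * (l * H)) /
          ((Real.sinh (π * (l * H)) ^ 2 + Real.sin (π * H) ^ 2) *
            (‖Complex.Gamma
              (Complex.I * ((l * H : ℝ) : ℂ) + ((α + H - 1 : ℝ) : ℂ) + 1)‖) ^ 2)))
      (nhdsWithin 0 (Set.Ioi 0)) (nhds (1 / (π * (1 + l ^ 2)))) := by
  have hsin := tendsto_sin_mul_div_nhdsGT π
  have hsinh : Tendsto (fun H ↦ Real.sinh (π * (l * H)) / H) (𝓝[>] 0) (𝓝 (π * l)) := by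
    simpa only [mul_assoc] using tendsto_sinh_mul_div_nhdsGT (π * l)
  have hratio := (tendsto_Gamma_ratio_nhds_zero α l hα).mono_left (nhdsWithin_le_nhds (s := Set.Ioi 0))
  have hlim := (hsin.mul hratio).div ((hsinh.pow 2).add (hsin.pow 2)) (by positivity)
  have hval : π * 1 / ((π * l) ^ 2 + π ^ 2) = 1 / (π * (1 + l ^ 2)) := by
    field_simp
    ring
  rw [← hval]
  exact hlim.congr fun H ↦ (mul_div_sq_add_sq_mul_eq ..).symm
end

section
/- For every κ > 0 and every H with 0 < H < 1, the function λ ↦ cosh(πλ) / ((sinh²(πλ) + sin²(πH)) · |Γ(iλ + κ + 1)|²) is nonincreasing on [0, ∞), where Γ is the complex Gamma function. -/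
/-!
By the reflection formula, `|Γ(1/2 + iλ)|² = π / cosh(πλ)` and
`|Γ(H + iλ) Γ(1 - H + iλ)|² = π² / (sinh²(πλ) + sin²(πH))`, so the function equals
`(|Γ(b + iλ)| / |Γ(1/2 + iλ)| · |Γ(c + iλ)| / |Γ(κ + 1 + iλ)|)² / π` with `{b, c} = {H, 1 - H}`
and `b ≤ 1/2`. For `0 < b ≤ a` the quotient `|Γ(b + iλ)| / |Γ(a + iλ)|` is nonincreasing in
`λ ≥ 0`: by Gauss's formula it is the limit of `n^(b-a) ∏_{j ≤ n} |a + j + iλ| / |b + j + iλ|`,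
and each factor `((a + j)² + λ²) / ((b + j)² + λ²)` decreases in `λ`.
-/

open Real Complex

lemma sq_add_sq_mul_sq_add_sq_le {a b x y : ℝ} (hab : b ^ 2 ≤ a ^ 2) (hxy : x ^ 2 ≤ y ^ 2) :
    (a ^ 2 + y ^ 2) * (b ^ 2 + x ^ 2) ≤ (a ^ 2 + x ^ 2) * (b ^ 2 + y ^ 2) := by
  nlinarith [mul_nonneg (sub_nonneg.2 hab) (sub_nonneg.2 hxy)]

lemma norm_ofReal_add_mul_I_pos {x : ℝ} (hx : 0 < x) (y : ℝ) : 0 < ‖(x + y * I : ℂ)‖ :=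
  hx.trans_le <| by simpa using re_le_norm (x + y * I : ℂ)

lemma antitoneOn_norm_add_mul_I_div {a b : ℝ} (hb : 0 < b) (hba : b ≤ a) :
    AntitoneOn (fun y : ℝ => ‖(a + y * I : ℂ)‖ / ‖(b + y * I : ℂ)‖) (Set.Ici 0) := by
  intro x hx y hy hxy
  rw [div_le_div_iff₀ (norm_ofReal_add_mul_I_pos hb y) (norm_ofReal_add_mul_I_pos hb x),
    ← pow_le_pow_iff_left₀ (by positivity) (by positivity) two_ne_zero, mul_pow, mul_pow]
  simp only [Complex.sq_norm, normSq_add_mul_I]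
  exact sq_add_sq_mul_sq_add_sq_le (by nlinarith) (by nlinarith [Set.mem_Ici.1 hx])

lemma norm_GammaSeq (s : ℂ) {n : ℕ} (hn : n ≠ 0) :
    ‖Complex.GammaSeq s n‖ = n ^ s.re * n.factorial / ∏ j ∈ Finset.range (n + 1), ‖s + j‖ := by
  rw [Complex.GammaSeq, norm_div, norm_mul, norm_prod, ← ofReal_natCast,
    norm_cpow_eq_rpow_re_of_pos (by positivity), Complex.norm_natCast]

lemma norm_GammaSeq_div_norm_GammaSeq (a b y : ℝ) {n : ℕ} (hn : n ≠ 0) :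
    ‖Complex.GammaSeq (b + y * I) n‖ / ‖Complex.GammaSeq (a + y * I) n‖ =
      (n : ℝ) ^ b / n ^ a * ∏ j ∈ Finset.range (n + 1),
        ‖((a + j : ℝ) : ℂ) + y * I‖ / ‖((b + j : ℝ) : ℂ) + y * I‖ := by
  have hshift : ∀ (c : ℝ) (j : ℕ), (c + y * I : ℂ) + j = ((c + j : ℝ) : ℂ) + y * I := by
    intros; push_cast; ring
  have hre : ∀ c : ℝ, ((c : ℂ) + y * I).re = c := by simp
  simp only [norm_GammaSeq _ hn, hre, hshift, Finset.prod_div_distrib]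
  field_simp

lemma antitoneOn_norm_GammaSeq_div {a b : ℝ} (hb : 0 < b) (hba : b ≤ a) {n : ℕ} (hn : n ≠ 0) :
    AntitoneOn (fun y : ℝ => ‖Complex.GammaSeq (b + y * I) n‖ / ‖Complex.GammaSeq (a + y * I) n‖)
      (Set.Ici 0) := by
  intro x hx y hy hxy
  simp only [norm_GammaSeq_div_norm_GammaSeq a b _ hn]
  refine mul_le_mul_of_nonneg_left (Finset.prod_le_prod (fun j _ => by positivity) fun j _ => ?_)
    (by positivity)
  exact antitoneOn_norm_add_mul_I_div (by positivity) (by linarith) hx hy hxy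

open Filter Topology in
lemma antitoneOn_norm_Gamma_div {a b : ℝ} (hb : 0 < b) (hba : b ≤ a) :
    AntitoneOn (fun y : ℝ => ‖Complex.Gamma (b + y * I)‖ / ‖Complex.Gamma (a + y * I)‖)
      (Set.Ici 0) := by
  refine antitoneOn_of_frequently_antitoneOn_of_tendsto (l := atTop)
    ((eventually_ne_atTop 0).mono fun n hn => antitoneOn_norm_GammaSeq_div hb hba hn).frequently
    fun y _ => ?_
  have hGamma : ‖Complex.Gamma (a + y * I)‖ ≠ 0 :=
    norm_ne_zero_iff.2 <| Complex.Gamma_ne_zero_of_re_pos <| by simpa using hb.trans_le hba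
  exact (Complex.GammaSeq_tendsto_Gamma _).norm.div (Complex.GammaSeq_tendsto_Gamma _).norm hGamma

lemma sq_norm_sin_add_mul_I (x y : ℝ) :
    ‖sin (x + y * I)‖ ^ 2 = Real.sin x ^ 2 + Real.sinh y ^ 2 := by
  rw [sin_add_mul_I, ← ofReal_sin, ← ofReal_cosh, ← ofReal_cos, ← ofReal_sinh, ← ofReal_mul,
    ← ofReal_mul, Complex.sq_norm, normSq_add_mul_I]
  nlinarith [Real.sin_sq_add_cos_sq x, Real.cosh_sq y]

open ComplexConjugate in
lemma norm_Gamma_mul_norm_Gamma_one_sub (x y : ℝ) :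
    ‖Complex.Gamma (x + y * I)‖ * ‖Complex.Gamma ((1 - x : ℝ) + y * I)‖ =
      π / ‖sin (π * (x + y * I))‖ := by
  have hconj : 1 - (x + y * I : ℂ) = conj (((1 - x : ℝ) : ℂ) + y * I) := by
    simp [Complex.ext_iff]
  rw [← norm_conj (Complex.Gamma (((1 - x : ℝ) : ℂ) + y * I)), ← Complex.Gamma_conj, ← hconj,
    ← norm_mul, Complex.Gamma_mul_Gamma_one_sub, norm_div, norm_real, Real.norm_of_nonneg pi_pos.le]

lemma sq_norm_Gamma_mul_norm_Gamma_one_sub (x y : ℝ) :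
    (‖Complex.Gamma (x + y * I)‖ * ‖Complex.Gamma ((1 - x : ℝ) + y * I)‖) ^ 2 =
      π ^ 2 / (Real.sin (π * x) ^ 2 + Real.sinh (π * y) ^ 2) := by
  rw [norm_Gamma_mul_norm_Gamma_one_sub, div_pow, ← sq_norm_sin_add_mul_I]
  congr 4
  push_cast
  ring

lemma sq_norm_Gamma_one_half_add_mul_I (y : ℝ) :
    ‖Complex.Gamma ((1 / 2 : ℝ) + y * I)‖ ^ 2 = π / Real.cosh (π * y) := by
  have h := sq_norm_Gamma_mul_norm_Gamma_one_sub (1 / 2) y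
  rw [show (1 - 1 / 2 : ℝ) = 1 / 2 by norm_num, show π * (1 / 2) = π / 2 by ring,
    Real.sin_pi_div_two, one_pow, ← Real.cosh_sq', ← sq, ← div_pow] at h
  exact (pow_left_inj₀ (by positivity) (by positivity) two_ne_zero).1 h

lemma cosh_div_sinh_sq_add_sin_sq_eq_norm_Gamma (κ : ℝ) {H : ℝ} (hH0 : 0 < H) (hH1 : H < 1)
    (l : ℝ) :
    Real.cosh (π * l) / ((Real.sinh (π * l) ^ 2 + Real.sin (π * H) ^ 2) *
        ‖Complex.Gamma (I * l + κ + 1)‖ ^ 2) =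
      (‖Complex.Gamma (H + l * I)‖ * ‖Complex.Gamma ((1 - H : ℝ) + l * I)‖) ^ 2 /
        (π * (‖Complex.Gamma ((1 / 2 : ℝ) + l * I)‖ *
          ‖Complex.Gamma ((κ + 1 : ℝ) + l * I)‖) ^ 2) := by
  have hsin : 0 < Real.sin (π * H) :=
    sin_pos_of_pos_of_lt_pi (by positivity) (by nlinarith [pi_pos])
  have hS : 0 < Real.sin (π * H) ^ 2 + Real.sinh (π * l) ^ 2 := by positivity
  have hGamma : I * l + κ + 1 = ((κ + 1 : ℝ) : ℂ) + l * I := by push_cast; ring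
  rw [hGamma, sq_norm_Gamma_mul_norm_Gamma_one_sub, mul_pow, sq_norm_Gamma_one_half_add_mul_I,
    ← mul_assoc, div_mul_eq_div_div, div_mul_eq_div_div _ (π * _)]
  congr 1
  have := (Real.cosh_pos (π * l)).ne'
  field_simp
  ring

lemma antitoneOn_sq_norm_Gamma_mul_div {a b c : ℝ} (hb : 0 < b) (hb2 : b ≤ 1 / 2) (hc : 0 < c)
    (hca : c ≤ a) :
    AntitoneOn (fun l : ℝ => (‖Complex.Gamma (b + l * I)‖ * ‖Complex.Gamma (c + l * I)‖) ^ 2 /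
        (π * (‖Complex.Gamma ((1 / 2 : ℝ) + l * I)‖ * ‖Complex.Gamma (a + l * I)‖) ^ 2))
      (Set.Ici 0) := by
  have hrw : ∀ p q r s : ℝ, (p * q) ^ 2 / (π * (r * s) ^ 2) = (p / r * (q / s)) ^ 2 / π :=
    fun _ _ _ _ => by ring
  intro x hx y hy hxy
  simp only [hrw]
  gcongr ?_ ^ 2 / π
  exact mul_le_mul (antitoneOn_norm_Gamma_div hb hb2 hx hy hxy)
    (antitoneOn_norm_Gamma_div hc hca hx hy hxy) (by positivity) (by positivity)

/-- For every `κ > 0` and every `H` with `0 < H < 1`, the function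
`λ ↦ cosh(πλ) / ((sinh²(πλ) + sin²(πH)) |Γ(iλ + κ + 1)|²)` is nonincreasing on `[0, ∞)`. -/
theorem stmt_12 (κ H : ℝ) (hκ : 0 < κ) (hH0 : 0 < H) (hH1 : H < 1) :
    AntitoneOn (fun l : ℝ =>
        Real.cosh (π * l) /
          ((Real.sinh (π * l) ^ 2 + Real.sin (π * H) ^ 2) *
            (‖Complex.Gamma (Complex.I * (l : ℂ) + (κ : ℂ) + 1)‖) ^ 2))
      (Set.Ici (0 : ℝ)) := by
  refine AntitoneOn.congr ?_ fun l _ =>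
    (cosh_div_sinh_sq_add_sin_sq_eq_norm_Gamma κ hH0 hH1 l).symm
  rcases le_total H (1 / 2) with hH | hH
  · exact antitoneOn_sq_norm_Gamma_mul_div hH0 hH (by linarith) (by linarith)
  · refine (antitoneOn_sq_norm_Gamma_mul_div (a := κ + 1) (b := 1 - H) (c := H) (by linarith)
      (by linarith) hH0 (by linarith)).congr fun l _ => ?_
    ring
end

section
/- For every κ with 0 ≤ κ ≤ 1/2, one has Γ(1/2 + κ) · Γ(1 − κ) ≤ √π · 4^κ, where Γ is the real Gamma function. -/
/-! Since `log ∘ Γ` is convex, `1/2 + κ` and `1 - κ` are mirror-image convex combinations of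
`1/2` and `1`, so `log Γ(1/2 + κ) + log Γ(1 - κ) ≤ log Γ(1/2) + log Γ(1) = log √π`;
the factor `4 ^ κ ≥ 1` is then only slack. -/

open Real

theorem ConvexOn.apply_combo_add_apply_swap_le {𝕜 E β : Type*} [Semiring 𝕜] [PartialOrder 𝕜]
    [AddCommMonoid E] [AddCommMonoid β] [PartialOrder β] [IsOrderedAddMonoid β] [SMul 𝕜 E]
    [Module 𝕜 β] {s : Set E} {f : E → β} (hf : ConvexOn 𝕜 s f) {x y : E} (hx : x ∈ s)
    (hy : y ∈ s) {a b : 𝕜} (ha : 0 ≤ a) (hb : 0 ≤ b) (hab : a + b = 1) :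
    f (a • x + b • y) + f (b • x + a • y) ≤ f x + f y :=
  calc f (a • x + b • y) + f (b • x + a • y)
      ≤ (a • f x + b • f y) + (b • f x + a • f y) :=
        add_le_add (hf.2 hx hy ha hb hab) (hf.2 hx hy hb ha ((add_comm b a).trans hab))
    _ = f x + f y := by
        rw [add_add_add_comm, ← add_smul, add_comm (b • f y), ← add_smul, hab, one_smul, one_smul]

theorem Real.Gamma_half_add_mul_Gamma_one_sub_le_sqrt_pi {κ : ℝ} (hκ0 : 0 ≤ κ)
    (hκ : κ ≤ 1 / 2) : Gamma (1 / 2 + κ) * Gamma (1 - κ) ≤ √π := by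
  have hlog := convexOn_log_Gamma.apply_combo_add_apply_swap_le (x := 1 / 2) (y := 1)
    (by norm_num) (by norm_num) (by linarith : (0 : ℝ) ≤ 1 - 2 * κ)
    (by linarith : (0 : ℝ) ≤ 2 * κ) (by ring)
  have hx : (1 - 2 * κ) • (1 / 2 : ℝ) + (2 * κ) • (1 : ℝ) = 1 / 2 + κ := by
    simp only [smul_eq_mul]; ring
  have hy : (2 * κ) • (1 / 2 : ℝ) + (1 - 2 * κ) • (1 : ℝ) = 1 - κ := by
    simp only [smul_eq_mul]; ring
  simp only [hx, hy, Function.comp_apply, Gamma_one, log_one, add_zero,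
    Gamma_one_half_eq] at hlog
  have hΓ₁ : 0 < Gamma (1 / 2 + κ) := Gamma_pos_of_pos (by linarith)
  have hΓ₂ : 0 < Gamma (1 - κ) := Gamma_pos_of_pos (by linarith)
  rw [← log_mul hΓ₁.ne' hΓ₂.ne'] at hlog
  exact (log_le_log_iff (mul_pos hΓ₁ hΓ₂) (sqrt_pos.mpr pi_pos)).mp hlog

/-- For every `κ` with `0 ≤ κ ≤ 1/2`, `Γ(1/2 + κ) Γ(1 − κ) ≤ √π · 4^κ`. -/
theorem stmt_15 (κ : ℝ) (hκ0 : 0 ≤ κ) (hκ : κ ≤ 1 / 2) :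
    Real.Gamma (1 / 2 + κ) * Real.Gamma (1 - κ) ≤ Real.sqrt π * (4 : ℝ) ^ κ := by
  calc Real.Gamma (1 / 2 + κ) * Real.Gamma (1 - κ) ≤ √π :=
        Gamma_half_add_mul_Gamma_one_sub_le_sqrt_pi hκ0 hκ
    _ ≤ √π * 4 ^ κ := le_mul_of_one_le_right (sqrt_nonneg π) (one_le_rpow (by norm_num) hκ0)
end
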